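/- Let η = diag(1,−1,…,−1) on ℝ^{1+n} with n ≥ 2, let v = (a₀,a₀,0,…,0)ᵀ with a₀ > 0 and w = (b₀,b₁,b₂,0,…,0)ᵀ with b₀² = b₁² + b₂² and b₀ − b₁ > 0. Then the matrix (1/(a₀(b₀−b₁)))(vwᵀ + wvᵀ) − η has eigenvalues 1 with multiplicity n−2, eigenvalue 0 with multiplicity 2, and the eigenvalue (3b₀+b₁)/(b₀−b₁) > 0; in particular it is positive semidefinite. -/

import Mathlib

/-!
Split off the coordinates `3, …, n`: there `v` and `w` vanish and `-η` is the identity, so `M` is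
block diagonal with blocks `B` (size 3) and `1` (size `n - 2`). The null condition
`b₂² = (b₀ + b₁)(b₀ - b₁)` makes `B = u uᵀ` for `u = (b₂ / (b₀ - b₁), b₂ / (b₀ - b₁), 1)`, a rank-one
positive semidefinite matrix with characteristic polynomial `X² (X - u ⬝ᵥ u)`, and
`u ⬝ᵥ u = (3 b₀ + b₁) / (b₀ - b₁)`.
-/

open Polynomial

/-- The matrix `η = diag(1, -1, …, -1)`. -/
noncomputable def minkMatrix (n : ℕ) : Matrix (Fin (n + 1)) (Fin (n + 1)) ℝ :=
  Matrix.diagonal (fun i => if i = 0 then 1 else -1)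

open Matrix

theorem Matrix.vecMulVec_sumElim_zero {R l m l' m' : Type*} [MulZeroClass R]
    (x : l → R) (y : m → R) :
    vecMulVec (Sum.elim x (0 : l' → R)) (Sum.elim y (0 : m' → R)) =
      fromBlocks (vecMulVec x y) 0 0 0 := by
  ext (i | i) (j | j) <;> simp [vecMulVec_apply]

theorem Matrix.PosSemidef.fromBlocks_zero_one {R m n : Type*} [CommRing R] [PartialOrder R]
    [StarRing R] [StarOrderedRing R] [NoZeroDivisors R] [Fintype m] [Fintype n] [DecidableEq n]
    {A : Matrix m m R} (hA : A.PosSemidef) :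
    (fromBlocks A 0 0 (1 : Matrix n n R)).PosSemidef := by
  have : Invertible (1 : Matrix n n R) := invertibleOne
  simpa using (PosDef.fromBlocks₂₂ A (0 : Matrix m n R) PosDef.one).mpr (by simpa using hA)

section NullBlock

variable {K : Type*} [Field K]

def nullBlockFactor (b₀ b₁ b₂ : K) : Fin 3 → K :=
  ![b₂ / (b₀ - b₁), b₂ / (b₀ - b₁), 1]

theorem nullBlock_eq_vecMulVec {a₀ b₀ b₁ b₂ : K} (ha : a₀ ≠ 0) (hb : b₀ ^ 2 = b₁ ^ 2 + b₂ ^ 2)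
    (hd : b₀ - b₁ ≠ 0) :
    (a₀ * (b₀ - b₁))⁻¹ • (vecMulVec ![a₀, a₀, 0] ![b₀, b₁, b₂] +
        vecMulVec ![b₀, b₁, b₂] ![a₀, a₀, 0]) - diagonal ![1, -1, -1] =
      vecMulVec (nullBlockFactor b₀ b₁ b₂) (nullBlockFactor b₀ b₁ b₂) := by
  ext i j
  fin_cases i <;> fin_cases j <;> simp [nullBlockFactor, vecMulVec_apply] <;> field_simp <;>
    linear_combination hb

theorem nullBlockFactor_dotProduct_self {b₀ b₁ b₂ : K} (hb : b₀ ^ 2 = b₁ ^ 2 + b₂ ^ 2)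
    (hd : b₀ - b₁ ≠ 0) :
    nullBlockFactor b₀ b₁ b₂ ⬝ᵥ nullBlockFactor b₀ b₁ b₂ = (3 * b₀ + b₁) / (b₀ - b₁) := by
  simp only [nullBlockFactor, dotProduct, Fin.sum_univ_three, Matrix.cons_val]
  field_simp
  linear_combination (-2) * hb

end NullBlock

def finThreeSumEquiv {n : ℕ} (hn : 2 ≤ n) : Fin 3 ⊕ Fin (n - 2) ≃ Fin (n + 1) :=
  finSumFinEquiv.trans (finCongr (by omega))

@[simp]
theorem finThreeSumEquiv_inl_val {n : ℕ} (hn : 2 ≤ n) (i : Fin 3) :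
    (finThreeSumEquiv hn (.inl i)).val = i := by
  simp [finThreeSumEquiv]

@[simp]
theorem finThreeSumEquiv_inr_val {n : ℕ} (hn : 2 ≤ n) (i : Fin (n - 2)) :
    (finThreeSumEquiv hn (.inr i)).val = 3 + i := by
  simp [finThreeSumEquiv]

theorem minkMatrix_submatrix_finThreeSumEquiv {n : ℕ} (hn : 2 ≤ n) :
    (minkMatrix n).submatrix (finThreeSumEquiv hn) (finThreeSumEquiv hn) =
      fromBlocks (diagonal ![1, -1, -1]) 0 0 (-1) := by
  rw [minkMatrix, submatrix_diagonal_equiv,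
    show (-1 : Matrix (Fin (n - 2)) (Fin (n - 2)) ℝ) = diagonal (fun _ => -1) by
      ext i j; by_cases h : i = j <;> simp [h],
    fromBlocks_diagonal]
  congr 1
  ext (i | i)
  · simp only [Function.comp_apply, ← Fin.val_eq_zero_iff, finThreeSumEquiv_inl_val]
    fin_cases i <;> simp
  · simp [← Fin.val_eq_zero_iff]

theorem submatrix_finThreeSumEquiv_eq_fromBlocks {n : ℕ} (hn : 2 ≤ n) {a₀ b₀ b₁ b₂ : ℝ}
    (ha : a₀ ≠ 0) (hb : b₀ ^ 2 = b₁ ^ 2 + b₂ ^ 2) (hd : b₀ - b₁ ≠ 0) :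
    letI v : Fin (n + 1) → ℝ := fun i => if i.val = 0 ∨ i.val = 1 then a₀ else 0
    letI w : Fin (n + 1) → ℝ := fun i =>
      if i.val = 0 then b₀ else if i.val = 1 then b₁ else if i.val = 2 then b₂ else 0
    ((a₀ * (b₀ - b₁))⁻¹ • (vecMulVec v w + vecMulVec w v) - minkMatrix n).submatrix
        (finThreeSumEquiv hn) (finThreeSumEquiv hn) =
      fromBlocks (vecMulVec (nullBlockFactor b₀ b₁ b₂) (nullBlockFactor b₀ b₁ b₂)) 0 0 1 := by
  set v : Fin (n + 1) → ℝ := fun i => if i.val = 0 ∨ i.val = 1 then a₀ else 0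
  set w : Fin (n + 1) → ℝ := fun i =>
    if i.val = 0 then b₀ else if i.val = 1 then b₁ else if i.val = 2 then b₂ else 0
  set e := finThreeSumEquiv hn
  have hv : v ∘ e = Sum.elim ![a₀, a₀, 0] 0 := by
    ext (i | i)
    · fin_cases i <;> simp [v, e, -Fin.val_eq_zero_iff]
    · simp [v, e, -Fin.val_eq_zero_iff, show 3 + (i : ℕ) ≠ 1 by omega]
  have hw : w ∘ e = Sum.elim ![b₀, b₁, b₂] 0 := by
    ext (i | i)
    · fin_cases i <;> simp [w, e, -Fin.val_eq_zero_iff]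
    · simp [w, e, -Fin.val_eq_zero_iff, show 3 + (i : ℕ) ≠ 1 by omega,
        show 3 + (i : ℕ) ≠ 2 by omega]
  change (a₀ * (b₀ - b₁))⁻¹ • (vecMulVec (v ∘ e) (w ∘ e) + vecMulVec (w ∘ e) (v ∘ e)) -
    (minkMatrix n).submatrix e e = _
  rw [hv, hw, vecMulVec_sumElim_zero, vecMulVec_sumElim_zero, fromBlocks_add, fromBlocks_smul,
    minkMatrix_submatrix_finThreeSumEquiv, sub_eq_add_neg, fromBlocks_neg, fromBlocks_add,
    ← sub_eq_add_neg, nullBlock_eq_vecMulVec ha hb hd]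
  simp

theorem stmt_9 {n : ℕ} (hn : 2 ≤ n) (a₀ b₀ b₁ b₂ : ℝ)
    (ha : 0 < a₀) (hb : b₀ ^ 2 = b₁ ^ 2 + b₂ ^ 2) (hbb : 0 < b₀ - b₁) :
    letI v : Fin (n + 1) → ℝ := fun i => if i.val = 0 ∨ i.val = 1 then a₀ else 0
    letI w : Fin (n + 1) → ℝ := fun i =>
      if i.val = 0 then b₀ else if i.val = 1 then b₁ else if i.val = 2 then b₂ else 0
    letI M : Matrix (Fin (n + 1)) (Fin (n + 1)) ℝ :=
      (a₀ * (b₀ - b₁))⁻¹ • (Matrix.vecMulVec v w + Matrix.vecMulVec w v) - minkMatrix n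
    M.charpoly = (X - C 1) ^ (n - 2) * X ^ 2 * (X - C ((3 * b₀ + b₁) / (b₀ - b₁))) ∧
      0 < (3 * b₀ + b₁) / (b₀ - b₁) ∧ M.PosSemidef := by
  have hblock := submatrix_finThreeSumEquiv_eq_fromBlocks hn ha.ne' hb hbb.ne'
  have hsum : 0 ≤ b₀ + b₁ := by nlinarith [sq_nonneg b₂]
  refine ⟨?_, div_pos (by linarith) hbb, ?_⟩
  · rw [← charpoly_reindex (finThreeSumEquiv hn).symm, reindex_apply, Equiv.symm_symm, hblock,
      charpoly_fromBlocks_zero₁₂, charpoly_vecMulVec, nullBlockFactor_dotProduct_self hb hbb.ne',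
      charpoly_one]
    simp [smul_eq_C_mul]
    ring
  · rw [← posSemidef_submatrix_equiv (finThreeSumEquiv hn), hblock]
    exact (posSemidef_vecMulVec_self_star _).fromBlocks_zero_one
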